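/- On the free K-vector space H on forests of planar rooted trees with operations * and ≻, there exists a unique K-linear map Δ : H → H ⊗ H such that Δ(|) = 0 and, writing Δ(x) = x₍₁₎ ⊗ x₍₂₎ in Sweedler notation, Δ(x ≻ y) = x₍₁₎ ⊗ (x₍₂₎ ≻ y) + (x ≻ y₍₁₎) ⊗ y₍₂₎ + x ⊗ y and Δ(x * y) = x₍₁₎ ⊗ (x₍₂₎ * y) + (x * y₍₁₎) ⊗ y₍₂₎ + x ⊗ y hold for all x, y ∈ H. -/

import Mathlib

open scoped TensorProduct

/-- Planar rooted trees: a tree is either the leaf `|`, or a grafting of at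
least two planar rooted trees (`graft t₁ t₂ rest` represents `[t₁, t₂, rest…]`). -/
inductive PTree : Type
  | leaf : PTree
  | graft (t₁ t₂ : PTree) (rest : List PTree) : PTree

/-- A forest is a nonempty word of planar rooted trees. -/
abbrev Forest : Type := {l : List PTree // l ≠ []}

/-- Grafting of a list of trees (only meaningful on lists of length ≥ 2;
on shorter lists we return a junk value, which is never used). -/
def graftList : List PTree → PTree
  | [] => .leaf
  | [a] => a
  | a :: b :: rest => .graft a b rest

mutual
/-- Number of leaves of a planar rooted tree. -/
def leavesT : PTree → ℕ
  | .leaf => 1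
  | .graft a b rest => leavesT a + leavesT b + leavesL rest

/-- Sum of the numbers of leaves of a list of trees. -/
def leavesL : List PTree → ℕ
  | [] => 0
  | t :: ts => leavesT t + leavesL ts
end

/-- Number of leaves of a forest. -/
def leavesF (w : Forest) : ℕ := leavesL w.1

variable (K : Type*) [Field K]

/-- `H K` is the free `K`-vector space with basis the set of forests of
planar rooted trees. -/
abbrev H : Type _ := Forest →₀ K

/-- The leaf, as a (one-tree) forest. -/
def leafF : Forest := ⟨[PTree.leaf], by simp⟩

/-- The concatenation product `*`, as a bilinear map on `H K`;
on basis forests it is concatenation of words. -/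
noncomputable def mulH : H K →ₗ[K] H K →ₗ[K] H K :=
  Finsupp.lift (H K →ₗ[K] H K) K Forest fun x =>
    Finsupp.lift (H K) K Forest fun y =>
      Finsupp.single ⟨x.1 ++ y.1, by simp [x.2]⟩ 1

/-- The grafting operation `≻` on two basis forests:
`(t₁…tₚ) ≻ (s₁…s_q) = Σ_{k=1}^{q} Σ_{i=0}^{p−1}
t₁…t_{p−(i+1)} [t_{p−i},…,tₚ, s₁,…,s_k] s_{k+1}…s_q`. -/
noncomputable def succForest (x y : Forest) : H K :=
  ∑ k ∈ Finset.range y.1.length, ∑ i ∈ Finset.range x.1.length,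
    Finsupp.single
      ⟨x.1.take (x.1.length - (i + 1)) ++
        (graftList (x.1.drop (x.1.length - (i + 1)) ++ y.1.take (k + 1)) :: y.1.drop (k + 1)),
        by simp⟩ 1

/-- The operation `≻`, as a bilinear map on `H K`. -/
noncomputable def succH : H K →ₗ[K] H K →ₗ[K] H K :=
  Finsupp.lift (H K →ₗ[K] H K) K Forest fun x =>
    Finsupp.lift (H K) K Forest fun y => succForest K x y

/-- A shortcut instance (definitionally the standard one) to help elaboration. -/
noncomputable instance : Zero (H K ⊗[K] H K) :=
  (inferInstance : AddCommMonoid (H K ⊗[K] H K)).toZero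

/-!
`H` is generated from the leaf by `*` and `≻`: a forest `t₁ … tₚ` with `p ≥ 2` is
`t₁ * (t₂ … tₚ)`, and a tree `[t₁, …, tₚ]` is `(t₁ … tₚ₋₁) ≻ tₚ` minus the other terms of that
product, which have the same leaves but are not single trees. So the two rules determine `Δ` on
every forest by recursion on a weight counting leaves, and the same recursion, read as a
definition, constructs `Δ`.
The `*`-rule then holds for all pairs of forests because `*` is associative, and the `≻`-rule
spreads from a single tree on the right to any forest `u * v` on the right through the identity
`x ≻ (u * v) + x * (u ≻ v) = (x ≻ u) * v + (x * u) ≻ v`.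
-/

theorem LinearMap.lTensor_rTensor_comm {R N N' P P' : Type*} [CommSemiring R]
    [AddCommMonoid N] [Module R N] [AddCommMonoid N'] [Module R N']
    [AddCommMonoid P] [Module R P] [AddCommMonoid P'] [Module R P']
    (f : N →ₗ[R] N') (g : P →ₗ[R] P') (t : P ⊗[R] N) :
    f.lTensor P' (g.rTensor N t) = g.rTensor N' (f.lTensor P t) := by
  rw [← LinearMap.comp_apply, ← LinearMap.comp_apply, LinearMap.lTensor_comp_rTensor,
    LinearMap.rTensor_comp_lTensor]

theorem Finsupp.lift_apply_single_one {R M X : Type*} [Semiring R] [AddCommMonoid M] [Module R M]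
    (f : X → M) (x : X) : Finsupp.lift M R X f (Finsupp.single x 1) = f x := by
  rw [← Finsupp.lift_symm_apply, (Finsupp.lift M R X).symm_apply_apply]

section InfinitesimalRule

variable {R M : Type*} [CommSemiring R] [AddCommMonoid M] [Module R M]

def InfinitesimalRule (B : M →ₗ[R] M →ₗ[R] M) (Δ : M →ₗ[R] M ⊗[R] M) (x y : M) : Prop :=
  Δ (B x y) = (B.flip y).lTensor M (Δ x) + (B x).rTensor M (Δ y) + x ⊗ₜ[R] y

variable {B P : M →ₗ[R] M →ₗ[R] M} {Δ : M →ₗ[R] M ⊗[R] M}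

theorem InfinitesimalRule.of_basis {ι : Type*} (b : Module.Basis ι R M)
    (h : ∀ i j, InfinitesimalRule B Δ (b i) (b j)) (x y : M) : InfinitesimalRule B Δ x y := by
  have key : B.compr₂ Δ = ((LinearMap.lTensorHom M ∘ₗ B.flip).compl₂ Δ).flip
      + (LinearMap.rTensorHom M ∘ₗ B).compl₂ Δ + TensorProduct.mk R M M :=
    LinearMap.ext_basis b b fun i j => h i j
  exact congr($key x y)

theorem InfinitesimalRule.mul_left_of_assoc (hassoc : ∀ a b c, P (P a b) c = P a (P b c))
    {a b c : M} (habc : InfinitesimalRule P Δ a (P b c)) (hbc : InfinitesimalRule P Δ b c)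
    (hab : InfinitesimalRule P Δ a b) : InfinitesimalRule P Δ (P a b) c := by
  have opR : P.flip (P b c) = P.flip c ∘ₗ P.flip b := LinearMap.ext fun d => (hassoc d b c).symm
  have opL : P (P a b) = P a ∘ₗ P b := LinearMap.ext fun d => hassoc a b d
  unfold InfinitesimalRule at *
  rw [hassoc, habc, hbc, hab, opR, opL]
  simp only [map_add, LinearMap.lTensor_comp_apply, LinearMap.rTensor_comp_apply,
    LinearMap.lTensor_tmul, LinearMap.rTensor_tmul, LinearMap.flip_apply,
    LinearMap.lTensor_rTensor_comm]
  abel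

theorem InfinitesimalRule.apply_eq {Δ' : M →ₗ[R] M ⊗[R] M} {x y : M}
    (h : InfinitesimalRule B Δ x y) (h' : InfinitesimalRule B Δ' x y)
    (hx : Δ x = Δ' x) (hy : Δ y = Δ' y) : Δ (B x y) = Δ' (B x y) := by
  rw [h, h', hx, hy]

end InfinitesimalRule

section InfinitesimalRuleRing

variable {R M : Type*} [CommRing R] [AddCommGroup M] [Module R M]
  {B P : M →ₗ[R] M →ₗ[R] M} {Δ : M →ₗ[R] M ⊗[R] M}

theorem InfinitesimalRule.mul_right
    (hcompat : ∀ a b c, B a (P b c) + P a (B b c) = P (B a b) c + B (P a b) c)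
    (hP : ∀ a b, InfinitesimalRule P Δ a b) {x u v : M} (hxu : InfinitesimalRule B Δ x u)
    (hxuv : InfinitesimalRule B Δ (P x u) v) (huv : InfinitesimalRule B Δ u v) :
    InfinitesimalRule B Δ x (P u v) := by
  have e : B x (P u v) = P (B x u) v + B (P x u) v - P x (B u v) :=
    eq_sub_of_add_eq (hcompat x u v)
  have opR : B.flip (P u v) = P.flip v ∘ₗ B.flip u + B.flip v ∘ₗ P.flip u - P.flip (B u v) :=
    LinearMap.ext fun a => eq_sub_of_add_eq (hcompat a u v)
  have opL : B (P x u) = B x ∘ₗ P u + P x ∘ₗ B u - P (B x u) :=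
    LinearMap.ext fun c => eq_sub_of_add_eq' (hcompat x u c).symm
  unfold InfinitesimalRule at *
  rw [e, map_sub, map_add, hxuv]
  simp only [hP]
  rw [hxu, huv, opR, opL]
  simp only [map_add, LinearMap.add_apply, LinearMap.sub_apply, LinearMap.lTensor_add,
    LinearMap.lTensor_sub, LinearMap.rTensor_add, LinearMap.rTensor_sub,
    LinearMap.lTensor_comp_apply, LinearMap.rTensor_comp_apply,
    LinearMap.lTensor_tmul, LinearMap.rTensor_tmul, LinearMap.flip_apply,
    LinearMap.lTensor_rTensor_comm]
  abel

end InfinitesimalRuleRing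

theorem leavesT_pos : ∀ t : PTree, 0 < leavesT t
  | .leaf => Nat.one_pos
  | .graft a _ _ => Nat.lt_of_lt_of_le (leavesT_pos a) (by rw [leavesT]; omega)

theorem leavesL_append (l₁ l₂ : List PTree) : leavesL (l₁ ++ l₂) = leavesL l₁ + leavesL l₂ := by
  induction l₁ with
  | nil => simp [leavesL]
  | cons t ts ih => rw [List.cons_append, leavesL, leavesL, ih, Nat.add_assoc]

theorem length_le_leavesL (l : List PTree) : l.length ≤ leavesL l := by
  induction l with
  | nil => simp [leavesL]
  | cons t ts ih => have := leavesT_pos t; rw [leavesL, List.length_cons]; omega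

theorem leavesT_graftList {l : List PTree} (h : 2 ≤ l.length) :
    leavesT (graftList l) = leavesL l := by
  match l, h with
  | a :: b :: rest, _ => simp only [graftList, leavesT, leavesL]; omega

-- Every recursive step below lowers this weight. The extra `1` of a one-tree forest is what the
-- terms of `x ≻ s` other than the tree `[x, s]` lack: they have just as many leaves.
def forestWeight (l : List PTree) : ℕ := 2 * leavesL l + if l.length = 1 then 1 else 0

theorem forestWeight_lt_append_left {xs ys : List PTree} (hy : ys ≠ []) :
    forestWeight xs < forestWeight (xs ++ ys) := by
  have := length_le_leavesL ys
  have := List.length_pos_iff.mpr hy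
  unfold forestWeight; rw [leavesL_append]; split_ifs <;> omega

theorem forestWeight_lt_append_right {xs ys : List PTree} (hx : xs ≠ []) :
    forestWeight ys < forestWeight (xs ++ ys) := by
  have := length_le_leavesL xs
  have := List.length_pos_iff.mpr hx
  unfold forestWeight; rw [leavesL_append]; split_ifs <;> omega

theorem forestWeight_graftList {l : List PTree} (h : 2 ≤ l.length) :
    forestWeight [graftList l] = forestWeight l + 1 := by
  simp only [forestWeight, leavesL, leavesT_graftList h, List.length_singleton]
  split_ifs <;> omega

def succTerm (x y : List PTree) (k i : ℕ) : List PTree :=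
  x.take (x.length - (i + 1)) ++
    graftList (x.drop (x.length - (i + 1)) ++ y.take (k + 1)) :: y.drop (k + 1)

theorem succTerm_ne_nil (x y : List PTree) (k i : ℕ) : succTerm x y k i ≠ [] := by
  simp [succTerm]

theorem forestWeight_succTerm {x y : List PTree} (hy : y ≠ []) {k i : ℕ} (hi : i + 1 < x.length) :
    forestWeight (succTerm x y k i) = forestWeight (x ++ y) := by
  have hgraft : 2 ≤ (x.drop (x.length - (i + 1)) ++ y.take (k + 1)).length := by
    have := List.length_pos_iff.mpr hy
    simp only [List.length_append, List.length_drop, List.length_take]; omega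
  have hleaves : leavesL (succTerm x y k i) = leavesL (x ++ y) := by
    have hx := congrArg leavesL (List.take_append_drop (x.length - (i + 1)) x)
    have hy := congrArg leavesL (List.take_append_drop (k + 1) y)
    rw [leavesL_append] at hx hy
    rw [succTerm, leavesL_append, leavesL, leavesT_graftList hgraft, leavesL_append,
      leavesL_append]
    omega
  have hlen : (succTerm x y k i).length ≠ 1 := by
    simp only [succTerm, List.length_append, List.length_take, List.length_cons]; omega
  have hlen' : (x ++ y).length ≠ 1 := by
    have := List.length_pos_iff.mpr hy
    simp only [List.length_append]; omega
  rw [forestWeight, forestWeight, hleaves, if_neg hlen, if_neg hlen']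

theorem two_le_length_append_singleton {xs : List PTree} (hx : xs ≠ []) (s : PTree) :
    2 ≤ (xs ++ [s]).length := by
  have := List.length_pos_iff.mpr hx
  simp only [List.length_append, List.length_singleton]; omega

theorem forestWeight_lt_graftList_left {xs : List PTree} (hx : xs ≠ []) (s : PTree) :
    forestWeight xs < forestWeight [graftList (xs ++ [s])] := by
  rw [forestWeight_graftList (two_le_length_append_singleton hx s)]
  exact (forestWeight_lt_append_left (List.cons_ne_nil s [])).trans (Nat.lt_succ_self _)

theorem forestWeight_lt_graftList_right {xs : List PTree} (hx : xs ≠ []) (s : PTree) :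
    forestWeight [s] < forestWeight [graftList (xs ++ [s])] := by
  rw [forestWeight_graftList (two_le_length_append_singleton hx s)]
  exact (forestWeight_lt_append_right hx).trans (Nat.lt_succ_self _)

theorem forestWeight_succTerm_lt_graftList {xs : List PTree} (s : PTree) {i : ℕ}
    (hi : i + 1 < xs.length) :
    forestWeight (succTerm xs [s] 0 i) < forestWeight [graftList (xs ++ [s])] := by
  have hx : xs ≠ [] := List.ne_nil_of_length_pos (by omega)
  rw [forestWeight_graftList (two_le_length_append_singleton hx s),
    forestWeight_succTerm (List.cons_ne_nil s []) hi]
  exact Nat.lt_succ_self _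

theorem graftList_dropLast_append_getLast (a b : PTree) (cs : List PTree) :
    graftList ((a :: b :: cs).dropLast ++ [(a :: b :: cs).getLast (List.cons_ne_nil _ _)])
      = .graft a b cs := by
  rw [List.dropLast_append_getLast]; rfl

instance : Append Forest := ⟨fun x y => ⟨x.1 ++ y.1, by simp [x.2]⟩⟩

theorem Forest.append_assoc (x y z : Forest) : x ++ y ++ z = x ++ (y ++ z) :=
  Subtype.ext (List.append_assoc x.1 y.1 z.1)

def PTree.toForest (t : PTree) : Forest := ⟨[t], List.cons_ne_nil t []⟩

theorem PTree.toForest_val (t : PTree) : t.toForest.1 = [t] := rfl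

section Operations

variable {K}

open Finsupp

theorem mulH_single (x y : Forest) : mulH K (single x 1) (single y 1) = single (x ++ y) 1 := by
  rw [mulH, lift_apply_single_one, lift_apply_single_one]; rfl

theorem succH_single (x y : Forest) : succH K (single x 1) (single y 1) = succForest K x y := by
  rw [succH, lift_apply_single_one, lift_apply_single_one]

theorem mulH_assoc (a b c : H K) : mulH K (mulH K a b) c = mulH K a (mulH K b c) := by
  have hbasis (k : Forest) : (mulH K).compr₂ ((mulH K).flip (single k 1))
      = (mulH K).compl₂ ((mulH K).flip (single k 1)) :=
    LinearMap.ext_basis Finsupp.basisSingleOne Finsupp.basisSingleOne fun i j => by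
      simp [mulH_single, Forest.append_assoc]
  have hop : mulH K (mulH K a b) = mulH K a ∘ₗ mulH K b :=
    Finsupp.basisSingleOne.ext fun k => by simpa using congr($(hbasis k) a b)
  exact congr($hop c)

theorem succForest_eq_sum (x y : Forest) :
    succForest K x y = ∑ k ∈ Finset.range y.1.length, ∑ i ∈ Finset.range x.1.length,
      single ⟨succTerm x.1 y.1 k i, succTerm_ne_nil _ _ _ _⟩ 1 := rfl

theorem single_congr {l l' : List PTree} (h : l = l') (hl : l ≠ []) (hl' : l' ≠ []) :
    (single ⟨l, hl⟩ 1 : H K) = single ⟨l', hl'⟩ 1 := by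
  subst h; rfl

theorem mulH_succForest_single (x y z : Forest) :
    mulH K (succForest K x y) (single z 1) = ∑ k ∈ Finset.range y.1.length,
      ∑ i ∈ Finset.range x.1.length,
        single ⟨succTerm x.1 y.1 k i ++ z.1, by simp [succTerm]⟩ 1 := by
  simp only [succForest_eq_sum, map_sum, LinearMap.sum_apply, mulH_single]
  rfl

theorem mulH_single_succForest (x y z : Forest) :
    mulH K (single x 1) (succForest K y z) = ∑ m ∈ Finset.range z.1.length,
      ∑ j ∈ Finset.range y.1.length, single ⟨x.1 ++ succTerm y.1 z.1 m j, by simp [x.2]⟩ 1 := by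
  simp only [succForest_eq_sum, map_sum, mulH_single]
  rfl

-- The terms of `x ≻ (y * z)`, and of `(x * y) ≻ z`, whose new tree contains all of `y`.
def spanTerm (x y z : List PTree) (m i : ℕ) : List PTree :=
  x.take (x.length - (i + 1)) ++
    graftList ((x.drop (x.length - (i + 1)) ++ y) ++ z.take (m + 1)) :: z.drop (m + 1)

theorem spanTerm_ne_nil (x y z : List PTree) (m i : ℕ) : spanTerm x y z m i ≠ [] := by
  simp [spanTerm]

noncomputable def spanSum (x y z : Forest) : H K :=
  ∑ m ∈ Finset.range z.1.length, ∑ i ∈ Finset.range x.1.length,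
    single ⟨spanTerm x.1 y.1 z.1 m i, spanTerm_ne_nil _ _ _ _ _⟩ 1

theorem succTerm_append_right_of_lt (x y z : List PTree) {k : ℕ} (i : ℕ) (hk : k < y.length) :
    succTerm x (y ++ z) k i = succTerm x y k i ++ z := by
  rw [succTerm, succTerm, List.take_append_of_le_length hk, List.drop_append_of_le_length hk]
  simp

theorem succTerm_append_right_add (x y z : List PTree) (m i : ℕ) :
    succTerm x (y ++ z) (y.length + m) i = spanTerm x y z m i := by
  rw [succTerm, spanTerm, Nat.add_assoc, List.take_append, List.drop_append]
  simp [List.take_of_length_le]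

theorem succTerm_append_left_add (x y z : List PTree) {i : ℕ} (m : ℕ) (hi : i < x.length) :
    succTerm (x ++ y) z m (y.length + i) = spanTerm x y z m i := by
  have hn : (x ++ y).length - (y.length + i + 1) = x.length - (i + 1) := by
    simp only [List.length_append]; omega
  rw [succTerm, spanTerm, hn, List.take_append_of_le_length (by omega),
    List.drop_append_of_le_length (by omega)]

theorem succTerm_append_left_of_lt (x y z : List PTree) {j : ℕ} (m : ℕ) (hj : j < y.length) :
    succTerm (x ++ y) z m j = x ++ succTerm y z m j := by
  have hn : (x ++ y).length - (j + 1) = x.length + (y.length - (j + 1)) := by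
    simp only [List.length_append]; omega
  rw [succTerm, succTerm, hn, List.take_append, List.drop_append]
  simp [List.take_of_length_le, List.drop_of_length_le]

theorem succForest_append_right (x y z : Forest) :
    succForest K x (y ++ z) = mulH K (succForest K x y) (single z 1) + spanSum x y z := by
  rw [succForest_eq_sum, mulH_succForest_single, spanSum]
  show ∑ k ∈ Finset.range (y.1 ++ z.1).length, _ = _
  rw [List.length_append, Finset.sum_range_add]
  congr 1
  · refine Finset.sum_congr rfl fun k hk => Finset.sum_congr rfl fun i _ => ?_
    exact single_congr (succTerm_append_right_of_lt x.1 y.1 z.1 i (Finset.mem_range.mp hk)) _ _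
  · refine Finset.sum_congr rfl fun m _ => Finset.sum_congr rfl fun i _ => ?_
    exact single_congr (succTerm_append_right_add x.1 y.1 z.1 m i) _ _

theorem succForest_append_left (x y z : Forest) :
    succForest K (x ++ y) z = mulH K (single x 1) (succForest K y z) + spanSum x y z := by
  rw [succForest_eq_sum, mulH_single_succForest, spanSum, ← Finset.sum_add_distrib]
  refine Finset.sum_congr rfl fun m _ => ?_
  show ∑ j ∈ Finset.range (x.1 ++ y.1).length, _ = _
  rw [List.length_append, add_comm x.1.length, Finset.sum_range_add]
  congr 1
  · refine Finset.sum_congr rfl fun j hj => ?_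
    exact single_congr (succTerm_append_left_of_lt x.1 y.1 z.1 m (Finset.mem_range.mp hj)) _ _
  · refine Finset.sum_congr rfl fun i hi => ?_
    exact single_congr (succTerm_append_left_add x.1 y.1 z.1 m (Finset.mem_range.mp hi)) _ _

theorem succH_mulH_compat (a b c : H K) :
    succH K a (mulH K b c) + mulH K a (succH K b c)
      = mulH K (succH K a b) c + succH K (mulH K a b) c := by
  have hbasis (k : Forest) : (succH K).compl₂ ((mulH K).flip (single k 1))
        + (mulH K).compl₂ ((succH K).flip (single k 1))
      = (succH K).compr₂ ((mulH K).flip (single k 1))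
        + (mulH K).compr₂ ((succH K).flip (single k 1)) :=
    LinearMap.ext_basis Finsupp.basisSingleOne Finsupp.basisSingleOne fun i j => by
      simp only [LinearMap.add_apply, LinearMap.compr₂_apply, LinearMap.compl₂_apply,
        LinearMap.flip_apply, Finsupp.coe_basisSingleOne, mulH_single, succH_single,
        succForest_append_right, succForest_append_left]
      abel
  have hop : succH K a ∘ₗ mulH K b + mulH K a ∘ₗ succH K b
      = mulH K (succH K a b) + succH K (mulH K a b) :=
    Finsupp.basisSingleOne.ext fun k => by simpa using congr($(hbasis k) a b)
  exact congr($hop c)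

theorem succForest_toForest (x : Forest) (s : PTree) :
    succForest K x s.toForest
      = ∑ i ∈ Finset.range (x.1.length - 1),
          single ⟨succTerm x.1 [s] 0 i, succTerm_ne_nil _ _ _ _⟩ 1
        + single (graftList (x.1 ++ [s])).toForest 1 := by
  have hlen : x.1.length = (x.1.length - 1) + 1 :=
    (Nat.sub_add_cancel (List.length_pos_iff.mpr x.2)).symm
  rw [succForest_eq_sum]
  show ∑ k ∈ Finset.range 1, _ = _
  rw [Finset.sum_range_one, hlen, Finset.sum_range_succ, Nat.add_sub_cancel]
  congr 1
  refine single_congr ?_ _ _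
  simp [succTerm, PTree.toForest, Nat.sub_add_cancel (List.length_pos_iff.mpr x.2)]

end Operations

section Coproduct

open Finsupp

-- `[graft a b cs] = x ≻ s` with `x ++ [s] = [a, b, cs…]`, up to the other terms of `x ≻ s`.
noncomputable def coprodList : List PTree → H K ⊗[K] H K
  | [] => 0
  | [.leaf] => 0
  | [.graft a b cs] =>
    let x : Forest := ⟨(a :: b :: cs).dropLast, by simp⟩
    let s : PTree := (a :: b :: cs).getLast (List.cons_ne_nil _ _)
    ((succH K).flip (single s.toForest 1)).lTensor (H K) (coprodList x.1)
      + (succH K (single x 1)).rTensor (H K) (coprodList [s])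
      + single x 1 ⊗ₜ single s.toForest 1
      - ∑ i ∈ (Finset.range (x.1.length - 1)).attach, coprodList (succTerm x.1 [s] 0 i)
  | t :: r :: rest =>
    ((mulH K).flip (single ⟨r :: rest, List.cons_ne_nil r rest⟩ 1)).lTensor (H K) (coprodList [t])
      + (mulH K (single t.toForest 1)).rTensor (H K) (coprodList (r :: rest))
      + single t.toForest 1 ⊗ₜ single ⟨r :: rest, List.cons_ne_nil r rest⟩ 1
termination_by l => forestWeight l
decreasing_by
  · rw [← graftList_dropLast_append_getLast]
    exact forestWeight_lt_graftList_left (by simp) _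
  · rw [← graftList_dropLast_append_getLast]
    exact forestWeight_lt_graftList_right (by simp) _
  · rw [← graftList_dropLast_append_getLast]
    exact forestWeight_succTerm_lt_graftList _ (Nat.add_lt_of_lt_sub (Finset.mem_range.mp i.2))
  · exact forestWeight_lt_append_left (xs := [t]) (List.cons_ne_nil r rest)
  · exact forestWeight_lt_append_right (xs := [t]) (ys := r :: rest) (List.cons_ne_nil t [])

theorem coprodList_cons (t r : PTree) (rest : List PTree) :
    coprodList K (t :: r :: rest)
      = ((mulH K).flip (single ⟨r :: rest, List.cons_ne_nil r rest⟩ 1)).lTensor (H K)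
          (coprodList K [t])
        + (mulH K (single t.toForest 1)).rTensor (H K) (coprodList K (r :: rest))
        + single t.toForest 1 ⊗ₜ single ⟨r :: rest, List.cons_ne_nil r rest⟩ 1 := by
  rw [coprodList]

theorem coprodList_graftList (x : Forest) (s : PTree) :
    coprodList K [graftList (x.1 ++ [s])]
      = ((succH K).flip (single s.toForest 1)).lTensor (H K) (coprodList K x.1)
        + (succH K (single x 1)).rTensor (H K) (coprodList K [s])
        + single x 1 ⊗ₜ single s.toForest 1
        - ∑ i ∈ Finset.range (x.1.length - 1), coprodList K (succTerm x.1 [s] 0 i) := by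
  obtain ⟨l, hl⟩ := x
  obtain ⟨a, tl, rfl⟩ := List.exists_cons_of_ne_nil hl
  rcases tl with _ | ⟨b, cs⟩
  · show coprodList K [PTree.graft a s []] = _
    rw [coprodList, Finset.sum_attach (Finset.range _) (fun i => coprodList K (succTerm _ _ 0 i))]
    rfl
  · show coprodList K [PTree.graft a b (cs ++ [s])] = _
    rw [coprodList, Finset.sum_attach (Finset.range _) (fun i => coprodList K (succTerm _ _ 0 i))]
    have hdrop : (b :: (cs ++ [s])).dropLast = b :: cs := by
      rw [← List.cons_append, List.dropLast_concat]
    have hlast : (a :: b :: (cs ++ [s])).getLast (List.cons_ne_nil _ _) = s := by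
      simp_rw [← List.cons_append, List.getLast_concat]
    simp only [List.dropLast_cons_cons, hdrop, hlast]

noncomputable def coprod : H K →ₗ[K] H K ⊗[K] H K :=
  Finsupp.lift (H K ⊗[K] H K) K Forest fun w => coprodList K w.1

variable {K}

theorem coprod_single (w : Forest) : coprod K (single w 1) = coprodList K w.1 :=
  lift_apply_single_one _ w

theorem coprod_leaf : coprod K (single leafF 1) = 0 := by
  rw [coprod_single, leafF, coprodList]

theorem infinitesimalRule_mulH_toForest (t : PTree) (y : Forest) :
    InfinitesimalRule (mulH K) (coprod K) (single t.toForest 1) (single y 1) := by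
  obtain ⟨_ | ⟨r, rest⟩, hy⟩ := y
  · exact absurd rfl hy
  · unfold InfinitesimalRule
    rw [mulH_single, coprod_single, coprod_single, coprod_single]
    exact coprodList_cons K t r rest

theorem infinitesimalRule_mulH_single (x y : Forest) :
    InfinitesimalRule (mulH K) (coprod K) (single x 1) (single y 1) := by
  obtain ⟨l, hl⟩ := x
  induction l generalizing y with
  | nil => exact absurd rfl hl
  | cons t xs ih =>
    rcases xs with _ | ⟨a, xs⟩
    · exact infinitesimalRule_mulH_toForest t y
    · set x' : Forest := ⟨a :: xs, List.cons_ne_nil a xs⟩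
      have hx : (single ⟨t :: a :: xs, hl⟩ 1 : H K) = mulH K (single t.toForest 1) (single x' 1) :=
        (mulH_single t.toForest x').symm
      have htx'y := infinitesimalRule_mulH_toForest (K := K) t (x' ++ y)
      rw [← mulH_single] at htx'y
      rw [hx]
      exact htx'y.mul_left_of_assoc mulH_assoc (ih y x'.2) (infinitesimalRule_mulH_toForest t x')

theorem infinitesimalRule_mulH (x y : H K) : InfinitesimalRule (mulH K) (coprod K) x y :=
  InfinitesimalRule.of_basis Finsupp.basisSingleOne
    (fun i j => by simpa only [coe_basisSingleOne] using infinitesimalRule_mulH_single i j) x y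

theorem infinitesimalRule_succH_toForest (x : Forest) (s : PTree) :
    InfinitesimalRule (succH K) (coprod K) (single x 1) (single s.toForest 1) := by
  unfold InfinitesimalRule
  rw [succH_single, succForest_toForest, map_add, map_sum]
  simp only [coprod_single, PTree.toForest_val]
  rw [coprodList_graftList]
  abel

theorem infinitesimalRule_succH_single (x y : Forest) :
    InfinitesimalRule (succH K) (coprod K) (single x 1) (single y 1) := by
  obtain ⟨l, hl⟩ := y
  induction l generalizing x with
  | nil => exact absurd rfl hl
  | cons u v ih =>
    rcases v with _ | ⟨v, vs⟩
    · exact infinitesimalRule_succH_toForest x u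
    · set y' : Forest := ⟨v :: vs, List.cons_ne_nil v vs⟩
      have hy : (single ⟨u :: v :: vs, hl⟩ 1 : H K) = mulH K (single u.toForest 1) (single y' 1) :=
        (mulH_single u.toForest y').symm
      have hxuy' := ih (x ++ u.toForest) y'.2
      rw [← mulH_single] at hxuy'
      rw [hy]
      exact .mul_right succH_mulH_compat infinitesimalRule_mulH
        (infinitesimalRule_succH_toForest x u) hxuy' (ih u.toForest y'.2)

theorem infinitesimalRule_succH (x y : H K) : InfinitesimalRule (succH K) (coprod K) x y :=
  InfinitesimalRule.of_basis Finsupp.basisSingleOne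
    (fun i j => by simpa only [coe_basisSingleOne] using infinitesimalRule_succH_single i j) x y

end Coproduct

section Generation

variable {K}

open Finsupp

theorem single_mem_of_leaf_mem_of_closed (S : Submodule K (H K)) (hleaf : single leafF 1 ∈ S)
    (hmul : ∀ x ∈ S, ∀ y ∈ S, mulH K x y ∈ S) (hsucc : ∀ x ∈ S, ∀ y ∈ S, succH K x y ∈ S)
    (w : Forest) : single w 1 ∈ S := by
  obtain ⟨l, hl⟩ := w
  induction hn : forestWeight l using Nat.strong_induction_on generalizing l with
  | _ n ih =>
  have ih' (l' : List PTree) (hl' : l' ≠ []) (h : forestWeight l' < forestWeight l) :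
      single ⟨l', hl'⟩ 1 ∈ S := ih _ (hn ▸ h) l' hl' rfl
  match l, hl with
  | [.leaf], _ => exact hleaf
  | t :: r :: rest, _ =>
    have hsplit : (single ⟨t :: r :: rest, List.cons_ne_nil _ _⟩ 1 : H K)
        = mulH K (single t.toForest 1) (single ⟨r :: rest, List.cons_ne_nil r rest⟩ 1) :=
      (mulH_single t.toForest ⟨r :: rest, List.cons_ne_nil r rest⟩).symm
    rw [hsplit]
    exact hmul _ (ih' [t] (List.cons_ne_nil _ _)
        (forestWeight_lt_append_left (List.cons_ne_nil _ _)))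
      _ (ih' (r :: rest) (List.cons_ne_nil _ _)
        (forestWeight_lt_append_right (xs := [t]) (List.cons_ne_nil _ _)))
  | [.graft a b cs], _ =>
    set x : Forest := ⟨(a :: b :: cs).dropLast, by simp⟩
    set s := (a :: b :: cs).getLast (List.cons_ne_nil _ _)
    rw [← graftList_dropLast_append_getLast] at ih'
    have hgraft : (single ⟨[.graft a b cs], List.cons_ne_nil _ _⟩ 1 : H K)
        = succH K (single x 1) (single s.toForest 1)
          - ∑ i ∈ Finset.range (x.1.length - 1),
              single ⟨succTerm x.1 [s] 0 i, succTerm_ne_nil _ _ _ _⟩ 1 := by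
      rw [succH_single, succForest_toForest, add_sub_cancel_left, graftList_dropLast_append_getLast]
      rfl
    rw [hgraft]
    exact sub_mem (hsucc _ (ih' _ x.2 (forestWeight_lt_graftList_left x.2 s)) _
        (ih' [s] (List.cons_ne_nil _ _) (forestWeight_lt_graftList_right x.2 s)))
      (Submodule.sum_mem _ fun i hi => ih' _ _
        (forestWeight_succTerm_lt_graftList s (Nat.add_lt_of_lt_sub (Finset.mem_range.mp hi))))

theorem eq_of_infinitesimalRule {Δ Δ' : H K →ₗ[K] H K ⊗[K] H K}
    (hleaf : Δ (single leafF 1) = 0) (hleaf' : Δ' (single leafF 1) = 0)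
    (hsucc : ∀ x y, InfinitesimalRule (succH K) Δ x y)
    (hsucc' : ∀ x y, InfinitesimalRule (succH K) Δ' x y)
    (hmul : ∀ x y, InfinitesimalRule (mulH K) Δ x y)
    (hmul' : ∀ x y, InfinitesimalRule (mulH K) Δ' x y) : Δ = Δ' :=
  Finsupp.basisSingleOne.ext fun w => by
    simpa only [coe_basisSingleOne, LinearMap.mem_eqLocus] using
      single_mem_of_leaf_mem_of_closed (LinearMap.eqLocus Δ Δ') (hleaf.trans hleaf'.symm)
      (fun x hx y hy => (hmul x y).apply_eq (hmul' x y) hx hy)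
      (fun x hx y hy => (hsucc x y).apply_eq (hsucc' x y) hx hy) w

end Generation

/-- There is a unique linear map `Δ : H → H ⊗ H` with `Δ(|) = 0`
satisfying the nonunital infinitesimal relations with respect to `≻` and `*`
(in Sweedler notation, `Δ(x ∘ y) = x₍₁₎ ⊗ (x₍₂₎ ∘ y) + (x ∘ y₍₁₎) ⊗ y₍₂₎ + x ⊗ y`). -/
theorem stmt4 (K : Type*) [Field K] :
    ∃! Δ : H K →ₗ[K] H K ⊗[K] H K,
      Δ (Finsupp.single leafF 1) = 0 ∧
      (∀ x y : H K, Δ (succH K x y)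
          = LinearMap.lTensor (H K) ((succH K).flip y) (Δ x)
            + LinearMap.rTensor (H K) (succH K x) (Δ y) + x ⊗ₜ[K] y) ∧
      (∀ x y : H K, Δ (mulH K x y)
          = LinearMap.lTensor (H K) ((mulH K).flip y) (Δ x)
            + LinearMap.rTensor (H K) (mulH K x) (Δ y) + x ⊗ₜ[K] y) :=
  ⟨coprod K, ⟨coprod_leaf, infinitesimalRule_succH, infinitesimalRule_mulH⟩,
    fun _ ⟨hleaf, hsucc, hmul⟩ => eq_of_infinitesimalRule hleaf coprod_leaf hsucc
      infinitesimalRule_succH hmul infinitesimalRule_mulH⟩
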